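/- arXiv:2006.16446 — 2 statements merged into one kernel-verified Lean document; each statement's English description precedes it below -/
import Mathlib

section
/- Assume the Poisson-solution setting below. Then for every g ∈ M₀ one has the identity ℰ_β(w̄ − g, w̄ + g) = 1/c − ℰ_β(g − ŵ, g − ŵ), where c = ∫_D u ξ dx. Consequently, if ℰ_β(h,h) ≥ 0 for every h ∈ M₀, then ℰ_β(w̄ − g, w̄ + g) ≤ 1/c for every g ∈ M₀. -/
open MeasureTheory

noncomputable section

/-- Partial derivative of `f` in the `i`-th coordinate direction. -/
def pd {d : ℕ} (f : (Fin d → ℝ) → ℝ) (i : Fin d) (x : Fin d → ℝ) : ℝ :=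
  fderiv ℝ f x (Pi.single i 1)

/-- Divergence of a vector field on `ℝ^d`: `div F = Σ_i ∂_i F_i`. -/
def divg {d : ℕ} (F : (Fin d → ℝ) → (Fin d → ℝ)) (x : Fin d → ℝ) : ℝ :=
  ∑ i, fderiv ℝ (fun y => F y i) x (Pi.single i 1)

/-- The vector field `a∇g`, i.e. `(a∇g)_i = Σ_j a_{ij} ∂_j g`. -/
def aGrad {d : ℕ} (a : (Fin d → ℝ) → Matrix (Fin d) (Fin d) ℝ)
    (g : (Fin d → ℝ) → ℝ) (x : Fin d → ℝ) : Fin d → ℝ :=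
  fun i => ∑ j, a x i j * pd g j x

/-- The operator `Lg = ∇·(a∇g) + b·∇g`. -/
def Lop {d : ℕ} (a : (Fin d → ℝ) → Matrix (Fin d) (Fin d) ℝ)
    (b : (Fin d → ℝ) → (Fin d → ℝ)) (g : (Fin d → ℝ) → ℝ) (x : Fin d → ℝ) : ℝ :=
  divg (aGrad a g) x + ∑ i, b x i * pd g i x

/-- The formal adjoint `L̃f = ∇·(a∇f) − b·∇f − div(b) f`. -/
def Ladj {d : ℕ} (a : (Fin d → ℝ) → Matrix (Fin d) (Fin d) ℝ)
    (b : (Fin d → ℝ) → (Fin d → ℝ)) (f : (Fin d → ℝ) → ℝ) (x : Fin d → ℝ) : ℝ :=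
  divg (aGrad a f) x - (∑ i, b x i * pd f i x) - divg b x * f x

/-- `∇f · a ∇g = Σ_{i,j} (∂_i f) a_{ij} (∂_j g)`. -/
def quadF {d : ℕ} (a : (Fin d → ℝ) → Matrix (Fin d) (Fin d) ℝ)
    (f g : (Fin d → ℝ) → ℝ) (x : Fin d → ℝ) : ℝ :=
  ∑ i, ∑ j, pd f i x * a x i j * pd g j x

/-- `f` is C² on an open neighborhood of the closure of `D`. -/
def C2Near {d : ℕ} (D : Set (Fin d → ℝ)) (f : (Fin d → ℝ) → ℝ) : Prop :=
  ∃ U : Set (Fin d → ℝ), IsOpen U ∧ closure D ⊆ U ∧ ContDiffOn ℝ 2 f U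

/-- A vector field is C¹ on an open neighborhood of the closure of `D`. -/
def C1NearVF {d : ℕ} (D : Set (Fin d → ℝ)) (F : (Fin d → ℝ) → (Fin d → ℝ)) : Prop :=
  ∃ U : Set (Fin d → ℝ), IsOpen U ∧ closure D ⊆ U ∧ ∀ i, ContDiffOn ℝ 1 (fun x => F x i) U

/-- `D` has the divergence property: `∫_D div F = 0` for every vector field `F` which is
C¹ on an open neighborhood of the closure of `D` and vanishes on the frontier of `D`. -/
def DivProp {d : ℕ} (D : Set (Fin d → ℝ)) : Prop :=
  ∀ F : (Fin d → ℝ) → (Fin d → ℝ), C1NearVF D F → (∀ x ∈ frontier D, F x = 0) →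
    ∫ x in D, divg F x = 0

/-- The bilinear form `ℰ_β(f,g) = ∫_D f ((β−L)g) dx`. -/
def Eform {d : ℕ} (D : Set (Fin d → ℝ)) (a : (Fin d → ℝ) → Matrix (Fin d) (Fin d) ℝ)
    (b : (Fin d → ℝ) → (Fin d → ℝ)) (β : ℝ) (f g : (Fin d → ℝ) → ℝ) : ℝ :=
  ∫ x in D, f x * (β * g x - Lop a b g x)

/-- `M_δ`: functions that are C² near the closure of `D`, vanish on `∂D`, and have
`∫_D h ξ dx = δ`. -/
def MemM {d : ℕ} (D : Set (Fin d → ℝ)) (ξ : (Fin d → ℝ) → ℝ) (δ : ℝ)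
    (h : (Fin d → ℝ) → ℝ) : Prop :=
  C2Near D h ∧ (∀ x ∈ frontier D, h x = 0) ∧ (∫ x in D, h x * ξ x) = δ

/-!
On functions that are C² near `closure D` and vanish on `∂D`, `ℰ_β` is a bilinear form, and the
divergence property applied to the flux `f a∇g − g a∇f + f g b` gives Green's identity
`ℰ_β(f, g) = ∫_D g (β − L̃) f` (this is where the symmetry of `a` enters). Hence
`ℰ_β(f, u) = ∫_D f ξ = ℰ_β(ũ, f)`: for `g ∈ M₀` all cross terms with `g` vanish, while
`ℰ_β(u, u) = ℰ_β(ũ, ũ) = c`, and expanding both sides in `u, ũ, g` gives the identity.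
The bound follows because `g − ŵ ∈ M₀`.
-/

lemma ContDiffOn.differentiableAt_of_isOpen {E F : Type*} [NormedAddCommGroup E]
    [NormedSpace ℝ E] [NormedAddCommGroup F] [NormedSpace ℝ F] {s : Set E} {f : E → F}
    {n : WithTop ℕ∞} (hf : ContDiffOn ℝ n f s) (hs : IsOpen s) (hn : n ≠ 0) {x : E}
    (hx : x ∈ s) : DifferentiableAt ℝ f x :=
  (hf.contDiffAt (hs.mem_nhds hx)).differentiableAt hn

lemma ContinuousOn.integrableOn_of_isBounded {X E : Type*} [MetricSpace X] [ProperSpace X]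
    [MeasurableSpace X] [OpensMeasurableSpace X] {μ : Measure X} [IsFiniteMeasureOnCompacts μ]
    [NormedAddCommGroup E] {s t : Set X} {F : X → E} (hF : ContinuousOn F t)
    (hs : Bornology.IsBounded s) (hst : closure s ⊆ t) : IntegrableOn F s μ :=
  ((hF.mono hst).integrableOn_compact hs.isCompact_closure).mono_set subset_closure

section Calculus

variable {d : ℕ} {U : Set (Fin d → ℝ)} {a : (Fin d → ℝ) → Matrix (Fin d) (Fin d) ℝ}
  {b : (Fin d → ℝ) → (Fin d → ℝ)} {f g : (Fin d → ℝ) → ℝ}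

lemma pd_add {x : Fin d → ℝ} (hf : DifferentiableAt ℝ f x) (hg : DifferentiableAt ℝ g x)
    (j : Fin d) : pd (f + g) j x = pd f j x + pd g j x := by
  simp only [pd, fderiv_add hf hg, add_apply]

lemma pd_smul (r : ℝ) (f : (Fin d → ℝ) → ℝ) (j : Fin d) (x : Fin d → ℝ) :
    pd (r • f) j x = r * pd f j x := by
  simp only [pd, fderiv_const_smul_field, Pi.smul_apply, smul_apply,
    smul_eq_mul]

lemma aGrad_smul (r : ℝ) (f : (Fin d → ℝ) → ℝ) (y : Fin d → ℝ) (i : Fin d) :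
    aGrad a (r • f) y i = r * aGrad a f y i := by
  simp only [aGrad, pd_smul, Finset.mul_sum]
  exact Finset.sum_congr rfl fun _ _ => by ring

lemma divg_smul (r : ℝ) (F : (Fin d → ℝ) → (Fin d → ℝ)) (x : Fin d → ℝ) :
    divg (r • F) x = r * divg F x := by
  simp only [divg, Finset.mul_sum]
  refine Finset.sum_congr rfl fun i _ => ?_
  rw [show (fun y => (r • F) y i) = r • fun y => F y i from rfl, fderiv_const_smul_field]
  rfl

lemma divg_add {F G : (Fin d → ℝ) → (Fin d → ℝ)} {x : Fin d → ℝ}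
    (hF : ∀ i, DifferentiableAt ℝ (fun y => F y i) x)
    (hG : ∀ i, DifferentiableAt ℝ (fun y => G y i) x) :
    divg (F + G) x = divg F x + divg G x := by
  simp only [divg, ← Finset.sum_add_distrib]
  refine Finset.sum_congr rfl fun i _ => ?_
  rw [show (fun y => (F + G) y i) = (fun y => F y i) + fun y => G y i from rfl,
    fderiv_add (hF i) (hG i)]
  rfl

lemma divg_congr {F G : (Fin d → ℝ) → (Fin d → ℝ)} {x : Fin d → ℝ} (h : F =ᶠ[nhds x] G) :
    divg F x = divg G x := by
  refine Finset.sum_congr rfl fun i _ => ?_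
  have hi : (fun y => F y i) =ᶠ[nhds x] fun y => G y i := h.mono fun y hy => congrFun hy i
  rw [hi.fderiv_eq]

lemma pd_contDiffOn (hU : IsOpen U) (hf : ContDiffOn ℝ 2 f U) (j : Fin d) :
    ContDiffOn ℝ 1 (pd f j) U :=
  (hf.fderiv_of_isOpen hU (by norm_num)).clm_apply contDiffOn_const

lemma pd_continuousOn (hU : IsOpen U) (hf : ContDiffOn ℝ 1 f U) (j : Fin d) :
    ContinuousOn (pd f j) U :=
  (hf.continuousOn_fderiv_of_isOpen hU le_rfl).clm_apply continuousOn_const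

lemma aGrad_contDiffOn (ha : ∀ i j, ContDiff ℝ 1 (fun x => a x i j)) (hU : IsOpen U)
    (hf : ContDiffOn ℝ 2 f U) (i : Fin d) : ContDiffOn ℝ 1 (fun y => aGrad a f y i) U :=
  ContDiffOn.sum fun j _ => (ha i j).contDiffOn.mul (pd_contDiffOn hU hf j)

lemma Lop_add (ha : ∀ i j, ContDiff ℝ 1 (fun x => a x i j)) (hU : IsOpen U)
    (hf : ContDiffOn ℝ 2 f U) (hg : ContDiffOn ℝ 2 g U) {x : Fin d → ℝ} (hx : x ∈ U) :
    Lop a b (f + g) x = Lop a b f x + Lop a b g x := by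
  have hpd : ∀ y ∈ U, ∀ j, pd (f + g) j y = pd f j y + pd g j y := fun y hy =>
    pd_add (hf.differentiableAt_of_isOpen hU two_ne_zero hy)
      (hg.differentiableAt_of_isOpen hU two_ne_zero hy)
  have hgrad : aGrad a (f + g) =ᶠ[nhds x] aGrad a f + aGrad a g :=
    Filter.eventuallyEq_of_mem (hU.mem_nhds hx) fun y hy => funext fun i => by
      simp only [aGrad, hpd y hy, Pi.add_apply, mul_add, Finset.sum_add_distrib]
  have hdiff : ∀ h : (Fin d → ℝ) → ℝ, ContDiffOn ℝ 2 h U →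
      ∀ i, DifferentiableAt ℝ (fun y => aGrad a h y i) x := fun h hh i =>
    (aGrad_contDiffOn ha hU hh i).differentiableAt_of_isOpen hU one_ne_zero hx
  simp only [Lop, divg_congr hgrad, divg_add (hdiff f hf) (hdiff g hg), hpd x hx, mul_add,
    Finset.sum_add_distrib]
  ring

lemma Lop_smul (r : ℝ) (f : (Fin d → ℝ) → ℝ) (x : Fin d → ℝ) :
    Lop a b (r • f) x = r * Lop a b f x := by
  have hgrad : aGrad a (r • f) = r • aGrad a f := funext fun y => funext (aGrad_smul r f y)
  simp only [Lop, hgrad, divg_smul, pd_smul, mul_add, Finset.mul_sum]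
  congr 1
  exact Finset.sum_congr rfl fun _ _ => by ring

lemma Lop_continuousOn (ha : ∀ i j, ContDiff ℝ 1 (fun x => a x i j))
    (hb : ∀ i, ContDiff ℝ 1 (fun x => b x i)) (hU : IsOpen U) (hf : ContDiffOn ℝ 2 f U) :
    ContinuousOn (Lop a b f) U :=
  (continuousOn_finsetSum _ fun i _ => pd_continuousOn hU (aGrad_contDiffOn ha hU hf i) i).add
    (continuousOn_finsetSum _ fun i _ =>
      (hb i).continuous.continuousOn.mul (pd_continuousOn hU (hf.of_le one_le_two) i))

lemma Ladj_continuousOn (ha : ∀ i j, ContDiff ℝ 1 (fun x => a x i j))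
    (hb : ∀ i, ContDiff ℝ 1 (fun x => b x i)) (hU : IsOpen U) (hf : ContDiffOn ℝ 2 f U) :
    ContinuousOn (Ladj a b f) U :=
  (((continuousOn_finsetSum _ fun i _ =>
      pd_continuousOn hU (aGrad_contDiffOn ha hU hf i) i).sub
    (continuousOn_finsetSum _ fun i _ =>
      (hb i).continuous.continuousOn.mul (pd_continuousOn hU (hf.of_le one_le_two) i))).sub
    ((continuousOn_finsetSum _ fun i _ => pd_continuousOn hU (hb i).contDiffOn i).mul
      hf.continuousOn))

end Calculus

section Green

variable {d : ℕ} {U : Set (Fin d → ℝ)} {a : (Fin d → ℝ) → Matrix (Fin d) (Fin d) ℝ}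
  {b : (Fin d → ℝ) → (Fin d → ℝ)} {f g : (Fin d → ℝ) → ℝ}

def greenFlux (a : (Fin d → ℝ) → Matrix (Fin d) (Fin d) ℝ) (b : (Fin d → ℝ) → (Fin d → ℝ))
    (f g : (Fin d → ℝ) → ℝ) (y : Fin d → ℝ) : Fin d → ℝ :=
  fun i => f y * aGrad a g y i - g y * aGrad a f y i + f y * g y * b y i

lemma sum_aGrad_mul_pd_comm (hsym : ∀ x i j, a x i j = a x j i) (x : Fin d → ℝ) :
    ∑ i, aGrad a g x i * pd f i x = ∑ i, aGrad a f x i * pd g i x := by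
  simp only [aGrad, Finset.sum_mul]
  rw [Finset.sum_comm]
  refine Finset.sum_congr rfl fun j _ => Finset.sum_congr rfl fun i _ => ?_
  rw [hsym x i j]
  ring

lemma divg_greenFlux (ha : ∀ i j, ContDiff ℝ 1 (fun x => a x i j))
    (hsym : ∀ x i j, a x i j = a x j i) (hb : ∀ i, ContDiff ℝ 1 (fun x => b x i))
    (hU : IsOpen U) (hf : ContDiffOn ℝ 2 f U) (hg : ContDiffOn ℝ 2 g U)
    {x : Fin d → ℝ} (hx : x ∈ U) :
    divg (greenFlux a b f g) x = f x * Lop a b g x - g x * Ladj a b f x := by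
  have Df := hf.differentiableAt_of_isOpen hU two_ne_zero hx
  have Dg := hg.differentiableAt_of_isOpen hU two_ne_zero hx
  have hcomp : ∀ i, fderiv ℝ (fun y => greenFlux a b f g y i) x (Pi.single i 1)
      = f x * fderiv ℝ (fun y => aGrad a g y i) x (Pi.single i 1) + aGrad a g x i * pd f i x
        - (g x * fderiv ℝ (fun y => aGrad a f y i) x (Pi.single i 1)
          + aGrad a f x i * pd g i x)
        + (f x * g x * fderiv ℝ (fun y => b y i) x (Pi.single i 1)
          + b x i * (f x * pd g i x + g x * pd f i x)) := by
    intro i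
    have DG := (aGrad_contDiffOn ha hU hg i).differentiableAt_of_isOpen hU one_ne_zero hx
    have DF := (aGrad_contDiffOn ha hU hf i).differentiableAt_of_isOpen hU one_ne_zero hx
    have DB := (hb i).differentiable one_ne_zero x
    have H := (((Df.hasFDerivAt.mul DG.hasFDerivAt).sub (Dg.hasFDerivAt.mul DF.hasFDerivAt)).add
      ((Df.hasFDerivAt.mul Dg.hasFDerivAt).mul DB.hasFDerivAt)).fderiv
    rw [show fderiv ℝ (fun y => greenFlux a b f g y i) x = _ from H]
    simp only [Pi.mul_apply, smul_add, add_apply, sub_apply, smul_apply, smul_eq_mul, pd,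
      add_right_inj]
    ring
  have hb_sum : ∑ i, b x i * (f x * pd g i x + g x * pd f i x)
      = f x * ∑ i, b x i * pd g i x + g x * ∑ i, b x i * pd f i x := by
    rw [Finset.mul_sum, Finset.mul_sum, ← Finset.sum_add_distrib]
    exact Finset.sum_congr rfl fun i _ => by ring
  rw [divg, Finset.sum_congr rfl fun i _ => hcomp i]
  simp only [Finset.sum_add_distrib, Finset.sum_sub_distrib, ← Finset.mul_sum]
  rw [sum_aGrad_mul_pd_comm hsym, hb_sum]
  simp only [Lop, Ladj, divg]
  ring

end Green

section Domain

variable {d : ℕ} {D : Set (Fin d → ℝ)} {a : (Fin d → ℝ) → Matrix (Fin d) (Fin d) ℝ}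
  {b : (Fin d → ℝ) → (Fin d → ℝ)} {f g : (Fin d → ℝ) → ℝ}

lemma C2Near.exists_common (hf : C2Near D f) (hg : C2Near D g) :
    ∃ U, IsOpen U ∧ closure D ⊆ U ∧ ContDiffOn ℝ 2 f U ∧ ContDiffOn ℝ 2 g U := by
  obtain ⟨Uf, hUf, hDf, hf⟩ := hf
  obtain ⟨Ug, hUg, hDg, hg⟩ := hg
  exact ⟨Uf ∩ Ug, hUf.inter hUg, Set.subset_inter hDf hDg,
    hf.mono Set.inter_subset_left, hg.mono Set.inter_subset_right⟩

lemma integrableOn_mul_sub_Lop (hDb : Bornology.IsBounded D)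
    (ha : ∀ i j, ContDiff ℝ 1 (fun x => a x i j)) (hb : ∀ i, ContDiff ℝ 1 (fun x => b x i))
    (hf : C2Near D f) (hg : C2Near D g) (β : ℝ) :
    IntegrableOn (fun x => f x * (β * g x - Lop a b g x)) D := by
  obtain ⟨U, hU, hDU, hfU, hgU⟩ := hf.exists_common hg
  exact (hfU.continuousOn.mul ((continuousOn_const.mul hgU.continuousOn).sub
    (Lop_continuousOn ha hb hU hgU))).integrableOn_of_isBounded hDb hDU

lemma integrableOn_mul_sub_Ladj (hDb : Bornology.IsBounded D)
    (ha : ∀ i j, ContDiff ℝ 1 (fun x => a x i j)) (hb : ∀ i, ContDiff ℝ 1 (fun x => b x i))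
    (hf : C2Near D f) (hg : C2Near D g) (β : ℝ) :
    IntegrableOn (fun x => g x * (β * f x - Ladj a b f x)) D := by
  obtain ⟨U, hU, hDU, hfU, hgU⟩ := hf.exists_common hg
  exact (hgU.continuousOn.mul ((continuousOn_const.mul hfU.continuousOn).sub
    (Ladj_continuousOn ha hb hU hfU))).integrableOn_of_isBounded hDb hDU

lemma integral_divg_greenFlux (hD : IsOpen D) (hdiv : DivProp D)
    (ha : ∀ i j, ContDiff ℝ 1 (fun x => a x i j))
    (hsym : ∀ x i j, a x i j = a x j i) (hb : ∀ i, ContDiff ℝ 1 (fun x => b x i))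
    (hf : C2Near D f) (hg : C2Near D g)
    (hf0 : ∀ x ∈ frontier D, f x = 0) (hg0 : ∀ x ∈ frontier D, g x = 0) :
    ∫ x in D, (f x * Lop a b g x - g x * Ladj a b f x) = 0 := by
  obtain ⟨U, hU, hDU, hfU, hgU⟩ := hf.exists_common hg
  have hC1 : C1NearVF D (greenFlux a b f g) := by
    refine ⟨U, hU, hDU, fun i => ?_⟩
    have hf1 := hfU.of_le one_le_two
    have hg1 := hgU.of_le one_le_two
    exact ((hf1.mul (aGrad_contDiffOn ha hU hgU i)).sub
      (hg1.mul (aGrad_contDiffOn ha hU hfU i))).add ((hf1.mul hg1).mul (hb i).contDiffOn)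
  have h0 : ∀ x ∈ frontier D, greenFlux a b f g x = 0 := fun x hx => funext fun i => by
    simp [greenFlux, hf0 x hx, hg0 x hx]
  rw [← hdiv _ hC1 h0]
  exact setIntegral_congr_fun hD.measurableSet fun x hx =>
    (divg_greenFlux ha hsym hb hU hfU hgU (hDU (subset_closure hx))).symm

lemma Eform_eq_integral_Ladj (hD : IsOpen D) (hDb : Bornology.IsBounded D) (hdiv : DivProp D)
    (ha : ∀ i j, ContDiff ℝ 1 (fun x => a x i j))
    (hsym : ∀ x i j, a x i j = a x j i) (hb : ∀ i, ContDiff ℝ 1 (fun x => b x i))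
    (hf : C2Near D f) (hg : C2Near D g)
    (hf0 : ∀ x ∈ frontier D, f x = 0) (hg0 : ∀ x ∈ frontier D, g x = 0) (β : ℝ) :
    Eform D a b β f g = ∫ x in D, g x * (β * f x - Ladj a b f x) := by
  rw [Eform, ← sub_eq_zero, ← integral_sub (integrableOn_mul_sub_Lop hDb ha hb hf hg β)
    (integrableOn_mul_sub_Ladj hDb ha hb hf hg β)]
  have hpt : ∀ x, f x * (β * g x - Lop a b g x) - g x * (β * f x - Ladj a b f x)
      = -(f x * Lop a b g x - g x * Ladj a b f x) := fun x => by ring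
  simp only [hpt, integral_neg, integral_divg_greenFlux hD hdiv ha hsym hb hf hg hf0 hg0,
    neg_zero]

lemma Eform_eq_integral_of_poisson {β : ℝ} {ξ u : (Fin d → ℝ) → ℝ} (hD : IsOpen D)
    (hueq : ∀ x ∈ D, β * u x - Lop a b u x = ξ x) (f : (Fin d → ℝ) → ℝ) :
    Eform D a b β f u = ∫ x in D, f x * ξ x :=
  setIntegral_congr_fun hD.measurableSet fun x hx => by simp only [hueq x hx]

lemma Eform_eq_integral_of_adjoint_poisson {β : ℝ} {ξ u : (Fin d → ℝ) → ℝ} (hD : IsOpen D)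
    (hDb : Bornology.IsBounded D) (hdiv : DivProp D)
    (ha : ∀ i j, ContDiff ℝ 1 (fun x => a x i j))
    (hsym : ∀ x i j, a x i j = a x j i) (hb : ∀ i, ContDiff ℝ 1 (fun x => b x i))
    (hu : C2Near D u) (hu0 : ∀ x ∈ frontier D, u x = 0)
    (hueq : ∀ x ∈ D, β * u x - Ladj a b u x = ξ x)
    (hf : C2Near D f) (hf0 : ∀ x ∈ frontier D, f x = 0) :
    Eform D a b β u f = ∫ x in D, f x * ξ x :=
  (Eform_eq_integral_Ladj hD hDb hdiv ha hsym hb hu hf hu0 hf0 β).trans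
    (setIntegral_congr_fun hD.measurableSet fun x hx => by simp only [hueq x hx])

end Domain

section Form

variable {d : ℕ} {D : Set (Fin d → ℝ)} {a : (Fin d → ℝ) → Matrix (Fin d) (Fin d) ℝ}
  {b : (Fin d → ℝ) → (Fin d → ℝ)}

def dirichletC2 (D : Set (Fin d → ℝ)) : Submodule ℝ ((Fin d → ℝ) → ℝ) where
  carrier := {f | C2Near D f ∧ ∀ x ∈ frontier D, f x = 0}
  zero_mem' := ⟨⟨Set.univ, isOpen_univ, Set.subset_univ _, contDiffOn_const⟩, fun _ _ => rfl⟩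
  add_mem' := by
    rintro f g ⟨hf, hf0⟩ ⟨hg, hg0⟩
    obtain ⟨U, hU, hDU, hfU, hgU⟩ := hf.exists_common hg
    exact ⟨⟨U, hU, hDU, hfU.add hgU⟩, fun x hx => by simp [hf0 x hx, hg0 x hx]⟩
  smul_mem' := by
    rintro r f ⟨⟨U, hU, hDU, hfU⟩, hf0⟩
    exact ⟨⟨U, hU, hDU, contDiffOn_const.smul hfU⟩, fun x hx => by simp [hf0 x hx]⟩

lemma Eform_add_left (hDb : Bornology.IsBounded D)
    (ha : ∀ i j, ContDiff ℝ 1 (fun x => a x i j)) (hb : ∀ i, ContDiff ℝ 1 (fun x => b x i))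
    (β : ℝ) {f₁ f₂ g : (Fin d → ℝ) → ℝ} (hf₁ : C2Near D f₁) (hf₂ : C2Near D f₂)
    (hg : C2Near D g) :
    Eform D a b β (f₁ + f₂) g = Eform D a b β f₁ g + Eform D a b β f₂ g := by
  simp only [Eform, Pi.add_apply, add_mul]
  exact integral_add (integrableOn_mul_sub_Lop hDb ha hb hf₁ hg β)
    (integrableOn_mul_sub_Lop hDb ha hb hf₂ hg β)

lemma Eform_add_right (hD : IsOpen D) (hDb : Bornology.IsBounded D)
    (ha : ∀ i j, ContDiff ℝ 1 (fun x => a x i j)) (hb : ∀ i, ContDiff ℝ 1 (fun x => b x i))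
    (β : ℝ) {f g₁ g₂ : (Fin d → ℝ) → ℝ} (hf : C2Near D f) (hg₁ : C2Near D g₁)
    (hg₂ : C2Near D g₂) :
    Eform D a b β f (g₁ + g₂) = Eform D a b β f g₁ + Eform D a b β f g₂ := by
  obtain ⟨U, hU, hDU, hg₁U, hg₂U⟩ := hg₁.exists_common hg₂
  have hpt : ∀ x ∈ D, f x * (β * (g₁ + g₂) x - Lop a b (g₁ + g₂) x)
      = f x * (β * g₁ x - Lop a b g₁ x) + f x * (β * g₂ x - Lop a b g₂ x) := fun x hx => by
    rw [Pi.add_apply, Lop_add ha hU hg₁U hg₂U (hDU (subset_closure hx))]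
    ring
  rw [Eform, setIntegral_congr_fun hD.measurableSet hpt]
  exact integral_add (integrableOn_mul_sub_Lop hDb ha hb hf hg₁ β)
    (integrableOn_mul_sub_Lop hDb ha hb hf hg₂ β)

lemma Eform_smul_left (β r : ℝ) (f g : (Fin d → ℝ) → ℝ) :
    Eform D a b β (r • f) g = r * Eform D a b β f g := by
  simp only [Eform, Pi.smul_apply, smul_eq_mul, mul_assoc, integral_const_mul]

lemma Eform_smul_right (β r : ℝ) (f g : (Fin d → ℝ) → ℝ) :
    Eform D a b β f (r • g) = r * Eform D a b β f g := by
  rw [Eform, Eform, ← integral_const_mul]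
  congr 1
  funext x
  rw [Lop_smul, Pi.smul_apply, smul_eq_mul]
  ring

def dirichletForm (hD : IsOpen D) (hDb : Bornology.IsBounded D)
    (ha : ∀ i j, ContDiff ℝ 1 (fun x => a x i j)) (hb : ∀ i, ContDiff ℝ 1 (fun x => b x i))
    (β : ℝ) : LinearMap.BilinForm ℝ (dirichletC2 D) :=
  LinearMap.mk₂ ℝ (fun f g => Eform D a b β f g)
    (fun f₁ f₂ g => Eform_add_left hDb ha hb β f₁.2.1 f₂.2.1 g.2.1)
    (fun r f g => Eform_smul_left (D := D) (a := a) (b := b) β r f g)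
    (fun f g₁ g₂ => Eform_add_right hD hDb ha hb β f.2.1 g₁.2.1 g₂.2.1)
    (fun r f g => Eform_smul_right (D := D) (a := a) (b := b) β r f g)

end Form

lemma LinearMap.BilinForm.expansion_identity {M : Type*} [AddCommGroup M] [Module ℝ M]
    (B : LinearMap.BilinForm ℝ M) {u ũ g : M} {c : ℝ} (hc : c ≠ 0) (huu : B u u = c)
    (hũũ : B ũ ũ = c) (hgu : B g u = 0) (hũg : B ũ g = 0) :
    B ((2 * c)⁻¹ • (u + ũ) - g) ((2 * c)⁻¹ • (u + ũ) + g)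
      = 1 / c - B (g - (2 * c)⁻¹ • (u - ũ)) (g - (2 * c)⁻¹ • (u - ũ)) := by
  simp only [map_add, map_sub, map_smul, LinearMap.add_apply, LinearMap.sub_apply,
    LinearMap.smul_apply, smul_eq_mul, huu, hũũ, hgu, hũg]
  field_simp
  ring

theorem stmt6_general {d : ℕ} (D : Set (Fin d → ℝ)) (hD : IsOpen D)
    (hDb : Bornology.IsBounded D) (hdiv : DivProp D)
    (a : (Fin d → ℝ) → Matrix (Fin d) (Fin d) ℝ)
    (ha : ∀ i j, ContDiff ℝ 1 (fun x => a x i j))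
    (hsym : ∀ x i j, a x i j = a x j i)
    (b : (Fin d → ℝ) → (Fin d → ℝ)) (hb : ∀ i, ContDiff ℝ 1 (fun x => b x i))
    (β : ℝ)
    (ξ : (Fin d → ℝ) → ℝ)
    (u ut : (Fin d → ℝ) → ℝ)
    (hu : C2Near D u) (hu0 : ∀ x ∈ frontier D, u x = 0)
    (hueq : ∀ x ∈ D, β * u x - Lop a b u x = ξ x)
    (hut : C2Near D ut) (hut0 : ∀ x ∈ frontier D, ut x = 0)
    (huteq : ∀ x ∈ D, β * ut x - Ladj a b ut x = ξ x)
    (c : ℝ) (hc : c = ∫ x in D, u x * ξ x) (hc0 : c ≠ 0)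
    (wbar what : (Fin d → ℝ) → ℝ)
    (hwbar : ∀ x, wbar x = (u x / c + ut x / c) / 2)
    (hwhat : ∀ x, what x = (u x / c - ut x / c) / 2) :
    (∀ g, MemM D ξ 0 g →
      Eform D a b β (wbar - g) (wbar + g)
        = 1 / c - Eform D a b β (g - what) (g - what)) ∧
    ((∀ h, MemM D ξ 0 h → 0 ≤ Eform D a b β h h) →
      ∀ g, MemM D ξ 0 g → Eform D a b β (wbar - g) (wbar + g) ≤ 1 / c) := by
  let B := dirichletForm hD hDb ha hb β
  let U : dirichletC2 D := ⟨u, hu, hu0⟩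
  let Ut : dirichletC2 D := ⟨ut, hut, hut0⟩
  have hBU (f : dirichletC2 D) : B f U = ∫ x in D, (f : (Fin d → ℝ) → ℝ) x * ξ x :=
    Eform_eq_integral_of_poisson hD hueq f
  have hBUt (f : dirichletC2 D) : B Ut f = ∫ x in D, (f : (Fin d → ℝ) → ℝ) x * ξ x :=
    Eform_eq_integral_of_adjoint_poisson hD hDb hdiv ha hsym hb hut hut0 huteq f.2.1 f.2.2
  have hUU : B U U = c := (hBU U).trans hc.symm
  have hUtU : B Ut U = c := (hBUt U).trans hc.symm
  have hUtUt : B Ut Ut = c := (hBUt Ut).trans ((hBU Ut).symm.trans hUtU)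
  have hwbar' : wbar = ↑((2 * c)⁻¹ • (U + Ut)) := funext fun x => by
    simp only [hwbar, smul_add, Submodule.coe_add, SetLike.val_smul, Pi.add_apply,
      Pi.smul_apply, smul_eq_mul, U, Ut]
    field_simp
  have hwhat' : what = ↑((2 * c)⁻¹ • (U - Ut)) := funext fun x => by
    simp only [hwhat, SetLike.val_smul, AddSubgroupClass.coe_sub, Pi.smul_apply,
      Pi.sub_apply, smul_eq_mul, U, Ut]
    field_simp
  have expand (g : (Fin d → ℝ) → ℝ) (hg : MemM D ξ 0 g) :
      Eform D a b β (wbar - g) (wbar + g) = 1 / c - Eform D a b β (g - what) (g - what) := by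
    let G : dirichletC2 D := ⟨g, hg.1, hg.2.1⟩
    rw [hwbar', hwhat']
    exact B.expansion_identity (g := G) hc0 hUU hUtUt ((hBU G).trans hg.2.2)
      ((hBUt G).trans hg.2.2)
  refine ⟨expand, fun hpos g hg => ?_⟩
  let R : dirichletC2 D := ⟨g, hg.1, hg.2.1⟩ - (2 * c)⁻¹ • (U - Ut)
  have hR : MemM D ξ 0 R := by
    refine ⟨R.2.1, R.2.2, (hBU R).symm.trans ?_⟩
    simp only [R, map_sub, map_smul, LinearMap.sub_apply, LinearMap.smul_apply, hUU, hUtU,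
      sub_self, smul_zero, sub_zero]
    exact (hBU _).trans hg.2.2
  linarith [expand g hg, hpos _ (hwhat' ▸ hR : MemM D ξ 0 (g - what))]

/-- the expansion identity `ℰ_β(w̄−g, w̄+g) = 1/c − ℰ_β(g−ŵ, g−ŵ)` for `g ∈ M₀`,
and the resulting upper bound when `ℰ_β` is nonnegative on `M₀`. -/
theorem stmt6 {d : ℕ} (D : Set (Fin d → ℝ)) (hD : IsOpen D)
    (hDb : Bornology.IsBounded D) (hdiv : DivProp D)
    (a : (Fin d → ℝ) → Matrix (Fin d) (Fin d) ℝ)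
    (ha : ∀ i j, ContDiff ℝ 1 (fun x => a x i j))
    (hsym : ∀ x i j, a x i j = a x j i)
    (b : (Fin d → ℝ) → (Fin d → ℝ)) (hb : ∀ i, ContDiff ℝ 1 (fun x => b x i))
    (β : ℝ) (hβ : 0 ≤ β)
    (ξ : (Fin d → ℝ) → ℝ)
    (hξ : ∃ U : Set (Fin d → ℝ), IsOpen U ∧ closure D ⊆ U ∧ ContinuousOn ξ U)
    (u ut : (Fin d → ℝ) → ℝ)
    (hu : C2Near D u) (hu0 : ∀ x ∈ frontier D, u x = 0)
    (hueq : ∀ x ∈ D, β * u x - Lop a b u x = ξ x)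
    (hut : C2Near D ut) (hut0 : ∀ x ∈ frontier D, ut x = 0)
    (huteq : ∀ x ∈ D, β * ut x - Ladj a b ut x = ξ x)
    (c : ℝ) (hc : c = ∫ x in D, u x * ξ x) (hc0 : c ≠ 0)
    (wbar what : (Fin d → ℝ) → ℝ)
    (hwbar : ∀ x, wbar x = (u x / c + ut x / c) / 2)
    (hwhat : ∀ x, what x = (u x / c - ut x / c) / 2) :
    (∀ g, MemM D ξ 0 g →
      Eform D a b β (wbar - g) (wbar + g)
        = 1 / c - Eform D a b β (g - what) (g - what)) ∧
    ((∀ h, MemM D ξ 0 h → 0 ≤ Eform D a b β h h) →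
      ∀ g, MemM D ξ 0 g → Eform D a b β (wbar - g) (wbar + g) ≤ 1 / c) :=
  stmt6_general D hD hDb hdiv a ha hsym b hb β ξ u ut hu hu0 hueq hut hut0 huteq c hc hc0 wbar what
    hwbar hwhat
end
end

section
/- (Theorem 4.1(2), core monotonicity in the drift parameter.) Let D ⊆ ℝ^d be open, let a have C¹ entries with a symmetric, let b have C¹ components with div(b) = 0 on D, and let β ∈ ℝ. Let N₀₀ be the set of C² functions g with compact support contained in D and ∫_D g dx = 0, and for γ ∈ ℝ set ℰ^{(γ)}_β(f,g) = ∫_D f(x)((β − L_{(γ)})g)(x) dx with L_{(γ)} = ∇·a∇ + γ b·∇. Then for every C² function f with compact support in D and every 0 ≤ γ₁ ≤ γ₂: sup over g ∈ N₀₀ of ℰ^{(γ₁)}_β(f−g, f+g) ≤ sup over g ∈ N₀₀ of ℰ^{(γ₂)}_β(f−g, f+g), the suprema taken in the extended reals. (Indeed, for every g ∈ N₀₀ there exists g' ∈ N₀₀, namely g' = g or g' = −g, with ℰ^{(γ₁)}_β(f−g, f+g) ≤ ℰ^{(γ₂)}_β(f−g', f+g').) -/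
open MeasureTheory

noncomputable section

/-- The parametrized form `ℰ^{(γ)}_β(f,g) = ∫_D f ((β − L_{(γ)})g) dx` with
`L_{(γ)} g = ∇·(a∇g) + γ b·∇g`. -/
def EformGamma {d : ℕ} (D : Set (Fin d → ℝ)) (a : (Fin d → ℝ) → Matrix (Fin d) (Fin d) ℝ)
    (b : (Fin d → ℝ) → (Fin d → ℝ)) (β γ : ℝ) (f g : (Fin d → ℝ) → ℝ) : ℝ :=
  ∫ x in D, f x * (β * g x - (divg (aGrad a g) x + γ * ∑ i, b x i * pd g i x))

/-- `N₀₀`: C² functions with compact support contained in `D` and zero integral. -/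
def MemN00 {d : ℕ} (D : Set (Fin d → ℝ)) (g : (Fin d → ℝ) → ℝ) : Prop :=
  ContDiff ℝ 2 g ∧ HasCompactSupport g ∧ tsupport g ⊆ D ∧ (∫ x in D, g x) = 0

/-!
Write `u = f - g` and `v = f + g`. Integrating by parts,
`ℰ^{(γ)}_β(u, v) = S(u, v) - γ ∫ u (b · ∇v)` with `S(u, v) = β ∫ u v + ∫ ∇u · a∇v`.
`S` is symmetric because `a` is, while the drift term is antisymmetric because `div b = 0` on
`D ⊇ tsupport u`. Replacing `g` by `-g` swaps `u` and `v`. If `∫ u (b · ∇v) ≤ 0` the form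
is nondecreasing in `γ` and `g' = g` works; otherwise `g' = -g` gives
`ℰ^{(γ₁)}_β(u, v) ≤ S(u, v) ≤ ℰ^{(γ₂)}_β(v, u)`.
-/

section Calculus

variable {d : ℕ}

theorem ContDiff.contDiff_pd {n : WithTop ℕ∞} {u : (Fin d → ℝ) → ℝ}
    (hu : ContDiff ℝ (n + 1) u) (i : Fin d) : ContDiff ℝ n fun x => pd u i x :=
  (hu.fderiv_right le_rfl).clm_apply contDiff_const

theorem ContDiff.continuous_pd {u : (Fin d → ℝ) → ℝ} (hu : ContDiff ℝ 1 u) (i : Fin d) :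
    Continuous fun x => pd u i x :=
  (ContDiff.contDiff_pd (n := 0) (by simpa using hu) i).continuous

theorem pd_mul {u v : (Fin d → ℝ) → ℝ} {x : Fin d → ℝ} (hu : DifferentiableAt ℝ u x)
    (hv : DifferentiableAt ℝ v x) (i : Fin d) :
    pd (fun y => u y * v y) i x = pd u i x * v x + u x * pd v i x := by
  simp only [pd, fderiv_fun_mul hu hv, add_apply, smul_apply, smul_eq_mul]
  ring

theorem divg_eq_sum_pd (F : (Fin d → ℝ) → (Fin d → ℝ)) (x : Fin d → ℝ) :
    divg F x = ∑ i, pd (fun y => F y i) i x :=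
  rfl

theorem continuous_divg {F : (Fin d → ℝ) → (Fin d → ℝ)}
    (hF : ∀ i, ContDiff ℝ 1 fun x => F x i) : Continuous (divg F) :=
  continuous_finsetSum _ fun i _ => (hF i).continuous_pd i

theorem divg_mul_left {w : (Fin d → ℝ) → ℝ} {F : (Fin d → ℝ) → (Fin d → ℝ)} {x : Fin d → ℝ}
    (hw : DifferentiableAt ℝ w x) (hF : ∀ i, DifferentiableAt ℝ (fun y => F y i) x) :
    divg (fun y i => w y * F y i) x = ∑ i, pd w i x * F x i + w x * divg F x := by
  simp only [divg_eq_sum_pd, pd_mul hw (hF _), Finset.sum_add_distrib, Finset.mul_sum]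

theorem integrable_mul_of_hasCompactSupport {u w : (Fin d → ℝ) → ℝ} (hu : Continuous u)
    (hcu : HasCompactSupport u) (hw : Continuous w) : Integrable (fun x => u x * w x) :=
  (hu.mul hw).integrable_of_hasCompactSupport hcu.mul_right

theorem integral_mul_divg_eq_neg {u : (Fin d → ℝ) → ℝ} {F : (Fin d → ℝ) → (Fin d → ℝ)}
    (hu : ContDiff ℝ 1 u) (hcu : HasCompactSupport u) (hF : ∀ i, ContDiff ℝ 1 fun x => F x i) :
    ∫ x, u x * divg F x = -∫ x, ∑ i, pd u i x * F x i := by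
  have hint_div (i : Fin d) : Integrable fun x => u x * pd (fun y => F y i) i x :=
    integrable_mul_of_hasCompactSupport hu.continuous hcu ((hF i).continuous_pd i)
  have hint_grad (i : Fin d) : Integrable fun x => pd u i x * F x i :=
    integrable_mul_of_hasCompactSupport (hu.continuous_pd i) (hcu.fderiv_apply ℝ _)
      (hF i).continuous
  simp only [divg_eq_sum_pd, Finset.mul_sum]
  rw [integral_finsetSum _ fun i _ => hint_div i, integral_finsetSum _ fun i _ => hint_grad i,
    ← Finset.sum_neg_distrib]
  refine Finset.sum_congr rfl fun i _ => ?_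
  exact integral_mul_fderiv_eq_neg_fderiv_mul_of_integrable (hint_grad i) (hint_div i)
    (integrable_mul_of_hasCompactSupport hu.continuous hcu (hF i).continuous)
    (fun x _ => hu.differentiable one_ne_zero x)
    (fun x _ => (hF i).differentiable one_ne_zero x)

end Calculus

section Forms

variable {d : ℕ} {D : Set (Fin d → ℝ)} {a : (Fin d → ℝ) → Matrix (Fin d) (Fin d) ℝ}
  {b : (Fin d → ℝ) → (Fin d → ℝ)} {u v : (Fin d → ℝ) → ℝ}

theorem quadF_eq_sum_pd_mul_aGrad (x : Fin d → ℝ) :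
    quadF a u v x = ∑ i, pd u i x * aGrad a v x i := by
  simp only [quadF, aGrad, Finset.mul_sum, mul_assoc]

theorem quadF_comm (hsym : ∀ x i j, a x i j = a x j i) : quadF a u v = quadF a v u := by
  ext x
  rw [quadF, quadF, Finset.sum_comm]
  exact Finset.sum_congr rfl fun i _ => Finset.sum_congr rfl fun j _ => by rw [hsym x j i]; ring

theorem contDiff_aGrad (ha : ∀ i j, ContDiff ℝ 1 fun x => a x i j) (hv : ContDiff ℝ 2 v)
    (i : Fin d) : ContDiff ℝ 1 fun x => aGrad a v x i :=
  ContDiff.sum fun j _ => (ha i j).mul (hv.contDiff_pd j)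

theorem integral_mul_divg_aGrad (ha : ∀ i j, ContDiff ℝ 1 fun x => a x i j)
    (hu : ContDiff ℝ 1 u) (hcu : HasCompactSupport u) (hv : ContDiff ℝ 2 v) :
    ∫ x, u x * divg (aGrad a v) x = -∫ x, quadF a u v x := by
  simp only [integral_mul_divg_eq_neg hu hcu (contDiff_aGrad ha hv), quadF_eq_sum_pd_mul_aGrad]

theorem integral_mul_drift_eq_neg (hb : ∀ i, ContDiff ℝ 1 fun x => b x i)
    (hdivb : ∀ x ∈ D, divg b x = 0) (hu : ContDiff ℝ 1 u) (hcu : HasCompactSupport u)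
    (hsu : tsupport u ⊆ D) (hv : ContDiff ℝ 1 v) :
    ∫ x, u x * ∑ i, b x i * pd v i x = -∫ x, v x * ∑ i, b x i * pd u i x := by
  have green := integral_mul_divg_eq_neg (F := fun y i => v y * b y i) hu hcu
    fun i => hv.mul (hb i)
  have hdivb_mul : ∀ x, u x * divg b x = 0 := fun x => by
    by_cases hx : x ∈ D
    · rw [hdivb x hx, mul_zero]
    · rw [image_eq_zero_of_notMem_tsupport (fun h => hx (hsu h)), zero_mul]
  convert green using 3 with x
  · rw [divg_mul_left (hv.differentiable one_ne_zero x)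
      fun i => (hb i).differentiable one_ne_zero x]
    simp only [mul_comm (b x _) (pd v _ x)]
    linear_combination (-v x) * hdivb_mul x
  · ext x
    rw [Finset.mul_sum]
    exact Finset.sum_congr rfl fun i _ => by ring

theorem EformGamma_eq (ha : ∀ i j, ContDiff ℝ 1 fun x => a x i j)
    (hb : ∀ i, ContDiff ℝ 1 fun x => b x i) (β γ : ℝ) (hu : ContDiff ℝ 1 u)
    (hcu : HasCompactSupport u) (hsu : tsupport u ⊆ D) (hv : ContDiff ℝ 2 v) :
    EformGamma D a b β γ u v = β * (∫ x, u x * v x) + (∫ x, quadF a u v x)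
      - γ * ∫ x, u x * ∑ i, b x i * pd v i x := by
  have hv1 : ContDiff ℝ 1 v := hv.of_le one_le_two
  have integrable_mul {w : (Fin d → ℝ) → ℝ} (hw : Continuous w) :
      Integrable fun x => u x * w x :=
    integrable_mul_of_hasCompactSupport hu.continuous hcu hw
  rw [EformGamma, setIntegral_eq_integral_of_forall_compl_eq_zero fun x hx => by
    rw [image_eq_zero_of_notMem_tsupport fun h => hx (hsu h), zero_mul]]
  have hsplit : (fun x => u x * (β * v x - (divg (aGrad a v) x + γ * ∑ i, b x i * pd v i x)))
      = fun x => β * (u x * v x) - u x * divg (aGrad a v) x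
        - γ * (u x * ∑ i, b x i * pd v i x) :=
    funext fun x => by ring
  have hdrift : Continuous fun x => ∑ i, b x i * pd v i x :=
    continuous_finsetSum _ fun i _ => (hb i).continuous.mul (hv1.continuous_pd i)
  have hint_uv := (integrable_mul hv1.continuous).const_mul β
  have hint_div := integrable_mul (continuous_divg (contDiff_aGrad ha hv))
  have hint_drift := (integrable_mul hdrift).const_mul γ
  rw [hsplit, integral_sub (f := fun x => β * (u x * v x) - u x * divg (aGrad a v) x)
      (hint_uv.sub hint_div) hint_drift, integral_sub hint_uv hint_div,
    integral_const_mul, integral_const_mul, integral_mul_divg_aGrad ha hu hcu hv]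
  ring

theorem EformGamma_le_or_le_swap (ha : ∀ i j, ContDiff ℝ 1 fun x => a x i j)
    (hsym : ∀ x i j, a x i j = a x j i) (hb : ∀ i, ContDiff ℝ 1 fun x => b x i)
    (hdivb : ∀ x ∈ D, divg b x = 0) (β : ℝ) {γ₁ γ₂ : ℝ} (hγ₁ : 0 ≤ γ₁) (hγ₁₂ : γ₁ ≤ γ₂)
    (hu : ContDiff ℝ 2 u) (hcu : HasCompactSupport u) (hsu : tsupport u ⊆ D)
    (hv : ContDiff ℝ 2 v) (hcv : HasCompactSupport v) (hsv : tsupport v ⊆ D) :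
    EformGamma D a b β γ₁ u v ≤ EformGamma D a b β γ₂ u v ∨
      EformGamma D a b β γ₁ u v ≤ EformGamma D a b β γ₂ v u := by
  have hu1 : ContDiff ℝ 1 u := hu.of_le one_le_two
  have hv1 : ContDiff ℝ 1 v := hv.of_le one_le_two
  rw [EformGamma_eq ha hb β γ₁ hu1 hcu hsu hv, EformGamma_eq ha hb β γ₂ hu1 hcu hsu hv,
    EformGamma_eq ha hb β γ₂ hv1 hcv hsv hu, quadF_comm hsym,
    integral_mul_drift_eq_neg hb hdivb hv1 hcv hsv hu1]
  simp only [mul_comm (v _) (u _)]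
  rcases le_total (∫ x, u x * ∑ i, b x i * pd v i x) 0 with hB | hB
  · left; nlinarith
  · right; nlinarith

end Forms

theorem MemN00.neg {d : ℕ} {D : Set (Fin d → ℝ)} {g : (Fin d → ℝ) → ℝ} (hg : MemN00 D g) :
    MemN00 D (-g) := by
  obtain ⟨hg2, hgc, hgD, hg0⟩ := hg
  refine ⟨hg2.neg, hgc.neg, (tsupport_neg g).symm ▸ hgD, ?_⟩
  simp only [Pi.neg_apply, integral_neg, hg0, neg_zero]

theorem stmt16_general {d : ℕ} (D : Set (Fin d → ℝ))
    (a : (Fin d → ℝ) → Matrix (Fin d) (Fin d) ℝ)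
    (ha : ∀ i j, ContDiff ℝ 1 (fun x => a x i j))
    (hsym : ∀ x i j, a x i j = a x j i)
    (b : (Fin d → ℝ) → (Fin d → ℝ)) (hb : ∀ i, ContDiff ℝ 1 (fun x => b x i))
    (hdivb : ∀ x ∈ D, divg b x = 0)
    (β : ℝ)
    (f : (Fin d → ℝ) → ℝ)
    (hf : ContDiff ℝ 2 f) (hfc : HasCompactSupport f) (hfD : tsupport f ⊆ D)
    (γ₁ γ₂ : ℝ) (hγ₁ : 0 ≤ γ₁) (hγ₁₂ : γ₁ ≤ γ₂) :
    (∀ g, MemN00 D g → ∃ g', MemN00 D g' ∧ (g' = g ∨ g' = -g) ∧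
      EformGamma D a b β γ₁ (f - g) (f + g) ≤ EformGamma D a b β γ₂ (f - g') (f + g')) ∧
    (⨆ g : {g : (Fin d → ℝ) → ℝ // MemN00 D g},
        ((EformGamma D a b β γ₁ (f - g.1) (f + g.1) : ℝ) : EReal))
      ≤ ⨆ g : {g : (Fin d → ℝ) → ℝ // MemN00 D g},
          ((EformGamma D a b β γ₂ (f - g.1) (f + g.1) : ℝ) : EReal) := by
  have exists_le : ∀ g, MemN00 D g → ∃ g', MemN00 D g' ∧ (g' = g ∨ g' = -g) ∧
      EformGamma D a b β γ₁ (f - g) (f + g) ≤ EformGamma D a b β γ₂ (f - g') (f + g') := by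
    intro g hgN
    have ⟨hg, hgc, hgD, _⟩ := hgN
    rcases EformGamma_le_or_le_swap ha hsym hb hdivb β hγ₁ hγ₁₂ (hf.sub hg) (hfc.sub hgc)
      ((tsupport_sub f g).trans (Set.union_subset hfD hgD)) (hf.add hg) (hfc.add hgc)
      ((tsupport_add f g).trans (Set.union_subset hfD hgD)) with h | h
    · exact ⟨g, hgN, .inl rfl, h⟩
    · exact ⟨-g, hgN.neg, .inr rfl, by rwa [sub_neg_eq_add, ← sub_eq_add_neg]⟩
  refine ⟨exists_le, iSup_mono' fun g => ?_⟩
  obtain ⟨g', hg', -, hle⟩ := exists_le g.1 g.2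
  exact ⟨⟨g', hg'⟩, EReal.coe_le_coe hle⟩

/-- Theorem 4.1(2), core monotonicity in the drift parameter. -/
theorem stmt16 {d : ℕ} (D : Set (Fin d → ℝ)) (hD : IsOpen D)
    (a : (Fin d → ℝ) → Matrix (Fin d) (Fin d) ℝ)
    (ha : ∀ i j, ContDiff ℝ 1 (fun x => a x i j))
    (hsym : ∀ x i j, a x i j = a x j i)
    (b : (Fin d → ℝ) → (Fin d → ℝ)) (hb : ∀ i, ContDiff ℝ 1 (fun x => b x i))
    (hdivb : ∀ x ∈ D, divg b x = 0)
    (β : ℝ)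
    (f : (Fin d → ℝ) → ℝ)
    (hf : ContDiff ℝ 2 f) (hfc : HasCompactSupport f) (hfD : tsupport f ⊆ D)
    (γ₁ γ₂ : ℝ) (hγ₁ : 0 ≤ γ₁) (hγ₁₂ : γ₁ ≤ γ₂) :
    (∀ g, MemN00 D g → ∃ g', MemN00 D g' ∧ (g' = g ∨ g' = -g) ∧
      EformGamma D a b β γ₁ (f - g) (f + g) ≤ EformGamma D a b β γ₂ (f - g') (f + g')) ∧
    (⨆ g : {g : (Fin d → ℝ) → ℝ // MemN00 D g},
        ((EformGamma D a b β γ₁ (f - g.1) (f + g.1) : ℝ) : EReal))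
      ≤ ⨆ g : {g : (Fin d → ℝ) → ℝ // MemN00 D g},
          ((EformGamma D a b β γ₂ (f - g.1) (f + g.1) : ℝ) : EReal) :=
  stmt16_general D a ha hsym b hb hdivb β f hf hfc hfD γ₁ γ₂ hγ₁ hγ₁₂
end
end
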